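/- Let G be a finite graph, o a vertex, and r ∈ ℕ. If the ball [G,o]_{2r} of radius 2r around o is a tree, then R_x(G,o) ≤ R_x([G,o]_{2r}, o) for all x > 0; if [G,o]_{2r+1} is a tree, then R_x(G,o) ≥ R_x([G,o]_{2r+1}, o). -/

import Mathlib

open Finset
open scoped Classical

/-- The set of matchings (dimeric configurations) of `G` using only vertices of `S`. -/
noncomputable def matchingsOn {V : Type*} (G : SimpleGraph V) (S : Finset V) :
    Finset (Finset (Sym2 V)) :=
  S.sym2.powerset.filter fun D =>
    (∀ e ∈ D, e ∈ G.edgeSet) ∧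
      (D : Set (Sym2 V)).Pairwise fun e f => ∀ v, v ∈ e → v ∉ f

/-- Monomer-dimer partition function `Z_G(x) = Σ_D x^(|S| - 2|D|)`. -/
noncomputable def Zmd {V : Type*} (G : SimpleGraph V) (S : Finset V) (x : ℝ) : ℝ :=
  ∑ D ∈ matchingsOn G S, x ^ (S.card - 2 * D.card)

/-- `R_x(G,o) = x·Z_{G−o}(x)/Z_G(x)`, the monomer probability at `o`
(model restricted to the vertex set `S`). -/
noncomputable def Rmd {V : Type*} (G : SimpleGraph V) (S : Finset V) (o : V) (x : ℝ) : ℝ :=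
  x * Zmd G (S.erase o) x / Zmd G S x

/-- The ball of center `o` and radius `r` in `G`, as a finset of vertices. -/
noncomputable def ballF {V : Type*} [Fintype V] (G : SimpleGraph V) (o : V) (r : ℕ) :
    Finset V :=
  Finset.univ.filter fun u => G.Reachable o u ∧ G.dist o u ≤ r

/-!
Expanding the monomer-dimer partition function at `o` gives the recursion
`R(S, o) = x² / (x² + ∑_{v ∼ o} R(S - o, v))`, and the right-hand side is antitone in the
`R(S - o, v)`. The value of `R` at a vertex only depends on the part of the graph connected to it.
If the ball `B` of radius `k + 1` around `o` is acyclic, the component of a neighbour `v` in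
`B - o` is exactly the ball of radius `k` around `v` in `S - o`; so the comparison between `S`
and its ball of radius `k + 1` at `o` reduces to the comparisons of radius `k` at the neighbours,
with the inequality reversed. At radius `0` the ball is `{o}`, where `R = 1`.
-/

open SimpleGraph

section Recursion

variable {V : Type*} {G : SimpleGraph V} {S T T' : Finset V} {D : Finset (Sym2 V)} {o v : V}
  {x : ℝ}

lemma mem_matchingsOn :
    D ∈ matchingsOn G S ↔ (∀ e ∈ D, e ∈ G.edgeSet ∧ ∀ a ∈ e, a ∈ S) ∧
      (D : Set (Sym2 V)).Pairwise fun e f => ∀ a, a ∈ e → a ∉ f := by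
  simp only [matchingsOn, mem_filter, mem_powerset, subset_iff, mem_sym2_iff]
  grind

lemma empty_mem_matchingsOn : ∅ ∈ matchingsOn G S := by
  simp [mem_matchingsOn]

lemma mem_of_mem_matchingsOn (hD : D ∈ matchingsOn G S) {e : Sym2 V} (he : e ∈ D) {a : V}
    (ha : a ∈ e) : a ∈ S :=
  ((mem_matchingsOn.mp hD).1 e he).2 a ha

lemma adj_of_mk_mem_matchingsOn (hD : D ∈ matchingsOn G S) {a b : V} (hab : s(a, b) ∈ D) :
    G.Adj a b :=
  ((mem_matchingsOn.mp hD).1 _ hab).1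

lemma erase_mem_matchingsOn (hD : D ∈ matchingsOn G S) {a b : V} (hab : s(a, b) ∈ D) :
    D.erase s(a, b) ∈ matchingsOn G ((S.erase a).erase b) := by
  rw [mem_matchingsOn] at hD ⊢
  refine ⟨fun e he => ?_, hD.2.mono (coe_subset.mpr (erase_subset _ _))⟩
  obtain ⟨hne, heD⟩ := mem_erase.mp he
  refine ⟨(hD.1 e heD).1, fun c hc => ?_⟩
  have hcab : c ∉ s(a, b) := hD.2 heD hab hne c hc
  simp only [Sym2.mem_iff, not_or] at hcab
  simp [hcab, (hD.1 e heD).2 c hc]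

lemma insert_mem_matchingsOn (hD : D ∈ matchingsOn G ((S.erase o).erase v)) (hov : G.Adj o v)
    (ho : o ∈ S) (hv : v ∈ S) : insert s(o, v) D ∈ matchingsOn G S := by
  have hD' : ∀ f ∈ D, ∀ c ∈ f, c ≠ o ∧ c ≠ v ∧ c ∈ S := fun f hf c hc => by
    have := mem_of_mem_matchingsOn hD hf hc
    simp only [mem_erase] at this
    tauto
  rw [mem_matchingsOn] at hD ⊢
  refine ⟨fun e he => ?_, ?_⟩
  · rcases mem_insert.mp he with rfl | he
    · exact ⟨hov, fun c hc => by rcases Sym2.mem_iff.mp hc with rfl | rfl <;> assumption⟩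
    · exact ⟨(hD.1 e he).1, fun c hc => (hD' e he c hc).2.2⟩
  · rw [coe_insert, Set.pairwise_insert]
    refine ⟨hD.2, fun f hf _ => ⟨fun c hc hcf => ?_, fun c hcf hc => ?_⟩⟩ <;>
    · have := hD' f hf c hcf
      rcases Sym2.mem_iff.mp hc with rfl | rfl <;> tauto

lemma two_mul_card_le_of_mem_matchingsOn (hD : D ∈ matchingsOn G S) : 2 * D.card ≤ S.card := by
  induction D using Finset.induction_on generalizing S with
  | empty => simp
  | insert e D he ih =>
    induction e using Sym2.ind with
    | _ a b =>
      have hab := mem_insert_self s(a, b) D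
      have hD' := erase_mem_matchingsOn hD hab
      rw [erase_insert he] at hD'
      have hb : b ∈ S.erase a := mem_erase.mpr ⟨(adj_of_mk_mem_matchingsOn hD hab).ne',
        mem_of_mem_matchingsOn hD hab (Sym2.mem_mk_right a b)⟩
      have := ih hD'
      have := card_erase_add_one hb
      have := card_erase_add_one (mem_of_mem_matchingsOn hD hab (Sym2.mem_mk_left a b))
      rw [card_insert_of_notMem he]
      omega

lemma mem_matchingsOn_erase :
    D ∈ matchingsOn G (S.erase o) ↔ D ∈ matchingsOn G S ∧ ∀ e ∈ D, o ∉ e := by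
  simp only [mem_matchingsOn, mem_erase]
  constructor
  · rintro ⟨hD, hpair⟩
    exact ⟨⟨fun e he => ⟨(hD e he).1, fun a ha => ((hD e he).2 a ha).2⟩, hpair⟩,
      fun e he hoe => ((hD e he).2 o hoe).1 rfl⟩
  · rintro ⟨⟨hD, hpair⟩, ho⟩
    exact ⟨fun e he => ⟨(hD e he).1,
      fun a ha => ⟨fun h => ho e he (h ▸ ha), (hD e he).2 a ha⟩⟩, hpair⟩

lemma sum_filter_mk_mem_matchingsOn (hov : G.Adj o v) (ho : o ∈ S) (hv : v ∈ S) (x : ℝ) :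
    ∑ D ∈ (matchingsOn G S).filter (s(o, v) ∈ ·), x ^ (S.card - 2 * D.card) =
      Zmd G ((S.erase o).erase v) x := by
  have hcard : ((S.erase o).erase v).card + 2 = S.card := by
    have := card_erase_add_one (mem_erase.mpr ⟨hov.ne', hv⟩)
    have := card_erase_add_one ho
    omega
  have hnotMem : ∀ D ∈ matchingsOn G ((S.erase o).erase v), s(o, v) ∉ D := fun D hD h => by
    simpa using mem_of_mem_matchingsOn hD h (Sym2.mem_mk_left o v)
  refine sum_nbij' (fun D => D.erase s(o, v)) (insert s(o, v)) ?_ ?_ ?_ ?_ ?_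
  · intro D hD
    exact erase_mem_matchingsOn (mem_filter.mp hD).1 (mem_filter.mp hD).2
  · intro D hD
    exact mem_filter.mpr ⟨insert_mem_matchingsOn hD hov ho hv, mem_insert_self _ _⟩
  · intro D hD
    exact insert_erase (mem_filter.mp hD).2
  · intro D hD
    exact erase_insert (hnotMem D hD)
  · intro D hD
    have he := (mem_filter.mp hD).2
    have := card_pos.mpr ⟨_, he⟩
    rw [card_erase_of_mem he, ← hcard]
    congr 1
    omega

lemma filter_not_forall_notMem_eq_biUnion :
    (matchingsOn G S).filter (fun D => ¬∀ e ∈ D, o ∉ e) =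
      ((S.erase o).filter (G.Adj o)).biUnion
        fun v => (matchingsOn G S).filter (s(o, v) ∈ ·) := by
  ext D
  simp only [mem_filter, mem_biUnion, mem_erase, not_forall, not_not]
  constructor
  · rintro ⟨hD, e, he, hoe⟩
    obtain ⟨v, rfl⟩ := Sym2.mem_iff_exists.mp hoe
    have hov := adj_of_mk_mem_matchingsOn hD he
    exact ⟨v, ⟨⟨hov.ne', mem_of_mem_matchingsOn hD he (Sym2.mem_mk_right o v)⟩, hov⟩,
      hD, he⟩
  · rintro ⟨v, -, hD, he⟩
    exact ⟨hD, _, he, Sym2.mem_mk_left o v⟩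

lemma Zmd_rec (ho : o ∈ S) (x : ℝ) :
    Zmd G S x = x * Zmd G (S.erase o) x +
      ∑ v ∈ (S.erase o).filter (G.Adj o), Zmd G ((S.erase o).erase v) x := by
  rw [Zmd, ← sum_filter_add_sum_filter_not (matchingsOn G S) (fun D => ∀ e ∈ D, o ∉ e)]
  congr 1
  · rw [Zmd, mul_sum]
    refine sum_congr (by ext D; simp [mem_matchingsOn_erase]) fun D hD => ?_
    have := two_mul_card_le_of_mem_matchingsOn hD
    have := card_erase_add_one ho
    rw [← pow_succ']
    congr 1
    omega
  · rw [filter_not_forall_notMem_eq_biUnion, sum_biUnion]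
    · refine sum_congr rfl fun v hv => ?_
      obtain ⟨hv, hov⟩ := mem_filter.mp hv
      exact sum_filter_mk_mem_matchingsOn hov ho (mem_of_mem_erase hv) x
    · intro v _ w _ hvw
      refine disjoint_filter.mpr fun D hD hv hw => ?_
      have hne : s(o, v) ≠ s(o, w) := fun h => hvw (Sym2.congr_right.mp h)
      exact (mem_matchingsOn.mp hD).2 hv hw hne o (Sym2.mem_mk_left o v) (Sym2.mem_mk_left o w)

lemma Zmd_pos (hx : 0 < x) : 0 < Zmd G S x :=
  sum_pos' (fun _ _ => (pow_pos hx _).le) ⟨∅, empty_mem_matchingsOn, pow_pos hx _⟩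

lemma Rmd_nonneg (hx : 0 < x) : 0 ≤ Rmd G S o x :=
  div_nonneg (mul_nonneg hx.le (Zmd_pos hx).le) (Zmd_pos hx).le

lemma Rmd_rec (hx : 0 < x) (ho : o ∈ S) :
    Rmd G S o x =
      x ^ 2 / (x ^ 2 + ∑ v ∈ (S.erase o).filter (G.Adj o), Rmd G (S.erase o) v x) := by
  have hZ : 0 < Zmd G (S.erase o) x := Zmd_pos hx
  have hsum : 0 ≤ ∑ v ∈ (S.erase o).filter (G.Adj o), Zmd G ((S.erase o).erase v) x :=
    sum_nonneg fun _ _ => (Zmd_pos hx).le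
  simp only [Rmd, ← sum_div, ← mul_sum]
  rw [Zmd_rec ho]
  field_simp

lemma Rmd_le_Rmd_of_sum_le (hx : 0 < x) (hoS : o ∈ S) (hoT : o ∈ T)
    (h : ∑ v ∈ (T.erase o).filter (G.Adj o), Rmd G (T.erase o) v x ≤
      ∑ v ∈ (S.erase o).filter (G.Adj o), Rmd G (S.erase o) v x) :
    Rmd G S o x ≤ Rmd G T o x := by
  rw [Rmd_rec hx hoS, Rmd_rec hx hoT]
  have : 0 ≤ ∑ v ∈ (T.erase o).filter (G.Adj o), Rmd G (T.erase o) v x :=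
    sum_nonneg fun _ _ => Rmd_nonneg hx
  exact div_le_div_of_nonneg_left (by positivity) (by positivity) (by linarith)

lemma filter_adj_erase_eq (hT' : T' ⊆ T) (h : ∀ b ∈ T, G.Adj v b → b ∈ T') :
    (T'.erase v).filter (G.Adj v) = (T.erase v).filter (G.Adj v) := by
  ext b
  simp only [mem_filter, mem_erase]
  grind

lemma Rmd_eq_of_closed (hx : 0 < x) (hT' : T' ⊆ T)
    (hclosed : ∀ a ∈ T', ∀ b ∈ T, G.Adj a b → b ∈ T') (hv : v ∈ T') :
    Rmd G T v x = Rmd G T' v x := by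
  induction T using Finset.strongInduction generalizing T' v with
  | H T ih =>
    rw [Rmd_rec hx (hT' hv), Rmd_rec hx hv, filter_adj_erase_eq hT' (hclosed v hv)]
    congr 2
    refine sum_congr rfl fun u hu => ?_
    obtain ⟨hu, hvu⟩ := mem_filter.mp hu
    refine ih _ (erase_ssubset (hT' hv)) (erase_subset_erase v hT') (fun a ha b hb hab => ?_)
      (mem_erase.mpr ⟨(mem_erase.mp hu).1, hclosed v hv u (mem_of_mem_erase hu) hvu⟩)
    exact mem_erase.mpr ⟨(mem_erase.mp hb).1,
      hclosed a (mem_of_mem_erase ha) b (mem_of_mem_erase hb) hab⟩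

end Recursion

section Balls

variable {V : Type*} {G : SimpleGraph V} {S T : Finset V} {o u v : V} {k : ℕ} {x : ℝ}

/-- Unlike `G.induce`, this keeps the vertex type: vertices outside `S` become isolated. -/
def inducedOn (G : SimpleGraph V) (S : Finset V) : SimpleGraph V where
  Adj a b := G.Adj a b ∧ a ∈ S ∧ b ∈ S
  symm := ⟨fun _ _ h => ⟨h.1.symm, h.2.2, h.2.1⟩⟩
  loopless := ⟨fun a h => G.loopless.irrefl a h.1⟩

lemma inducedOn_adj {a b : V} : (inducedOn G S).Adj a b ↔ G.Adj a b ∧ a ∈ S ∧ b ∈ S :=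
  Iff.rfl

lemma inducedOn_le : inducedOn G S ≤ G := fun _ _ h => h.1

lemma inducedOn_mono (h : S ⊆ T) : inducedOn G S ≤ inducedOn G T :=
  fun _ _ hab => ⟨hab.1, h hab.2.1, h hab.2.2⟩

lemma inducedOn_univ [Fintype V] : inducedOn G univ = G := by
  ext a b
  simp [inducedOn]

lemma mem_of_mem_support_inducedOn {a b s : V} (p : (inducedOn G S).Walk a b) (hb : b ∈ S)
    (hs : s ∈ p.support) : s ∈ S := by
  induction p with
  | nil => simpa [List.mem_singleton.mp (Walk.support_nil ▸ hs)] using hb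
  | cons h p ih =>
    rcases List.mem_cons.mp (Walk.support_cons h p ▸ hs) with rfl | hs
    · exact h.2.1
    · exact ih hb hs

lemma exists_walk_inducedOn_of_support_subset {a b : V} (p : G.Walk a b)
    (hp : ∀ s ∈ p.support, s ∈ T) :
    ∃ q : (inducedOn G T).Walk a b, q.length = p.length := by
  induction p with
  | nil => exact ⟨Walk.nil, rfl⟩
  | cons h p ih =>
    obtain ⟨q, hq⟩ := ih fun s hs => hp s (by simp [hs])
    refine ⟨Walk.cons (inducedOn_adj.mpr ⟨h, hp _ (by simp), hp _ (by simp)⟩) q, ?_⟩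
    rw [Walk.length_cons, Walk.length_cons, hq]

lemma isAcyclic_inducedOn (h : (G.induce (S : Set V)).IsAcyclic) : (inducedOn G S).IsAcyclic := by
  intro u c hc
  have hu : u ∈ S := (c.adj_snd hc.not_nil).2.1
  have hsupp : ∀ s ∈ (c.mapLe (inducedOn_le (G := G))).support, s ∈ (S : Set V) := by
    rw [Walk.support_mapLe_eq_support]
    exact fun s hs => mem_of_mem_support_inducedOn c hu hs
  refine h ((c.mapLe (inducedOn_le (G := G))).induce _ hsupp) ?_
  let ι := Embedding.induce (G := G) (S : Set V)
  refine (Walk.isCycle_map_iff_of_injective (f := ι.toHom) ι.injective).mp ?_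
  rw [Walk.map_induce]
  exact hc.mapLe inducedOn_le

lemma SimpleGraph.IsAcyclic.eq_of_adj_of_notMem_support {H : SimpleGraph V} (hH : H.IsAcyclic)
    {w : V} (hv : H.Adj o v) (hw : H.Adj o w) (p : H.Walk v w) (ho : o ∉ p.support) :
    w = v := by
  have hpath : (Walk.cons hv p.bypass).IsPath :=
    (Walk.cons_isPath_iff _ _).mpr
      ⟨p.bypass_isPath, fun h => ho (p.support_bypass_subset_support h)⟩
  simpa using hH.eq_snd_of_adj_start hpath hw (Walk.end_mem_support _)

noncomputable def ballOn (G : SimpleGraph V) (S : Finset V) (o : V) (k : ℕ) : Finset V :=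
  S.filter fun u => ∃ p : (inducedOn G S).Walk o u, p.length ≤ k

lemma mem_ballOn :
    u ∈ ballOn G S o k ↔ u ∈ S ∧ ∃ p : (inducedOn G S).Walk o u, p.length ≤ k :=
  mem_filter

lemma ballOn_subset : ballOn G S o k ⊆ S := filter_subset _ _

lemma self_mem_ballOn (ho : o ∈ S) : o ∈ ballOn G S o k :=
  mem_ballOn.mpr ⟨ho, Walk.nil, k.zero_le⟩

lemma ballOn_zero (ho : o ∈ S) : ballOn G S o 0 = {o} := by
  ext u
  simp only [mem_ballOn, mem_singleton, Nat.le_zero]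
  constructor
  · rintro ⟨-, p, hp⟩
    exact (Walk.eq_of_length_eq_zero hp).symm
  · rintro rfl
    exact ⟨ho, Walk.nil, rfl⟩

lemma ballOn_univ [Fintype V] : ballOn G univ o k = ballF G o k := by
  ext u
  simp only [mem_ballOn, ballF, mem_filter, mem_univ, true_and]
  rw [inducedOn_univ]
  constructor
  · rintro ⟨p, hp⟩
    exact ⟨⟨p⟩, (dist_le p).trans hp⟩
  · rintro ⟨hr, hd⟩
    obtain ⟨p, hp⟩ := hr.exists_walk_length_eq_dist
    exact ⟨p, hp ▸ hd⟩

lemma mem_ballOn_of_mem_support (p : (inducedOn G S).Walk o u) (hu : u ∈ S) (hp : p.length ≤ k)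
    {s : V} (hs : s ∈ p.support) : s ∈ ballOn G S o k :=
  mem_ballOn.mpr ⟨mem_of_mem_support_inducedOn p hu hs, p.takeUntil s hs,
    (p.length_takeUntil_le_length hs).trans hp⟩

lemma reachable_of_mem_ballOn (hu : u ∈ ballOn G S o k) :
    (inducedOn G (ballOn G S o k)).Reachable o u := by
  obtain ⟨huS, p, hp⟩ := mem_ballOn.mp hu
  obtain ⟨q, -⟩ := exists_walk_inducedOn_of_support_subset (p.mapLe inducedOn_le) (by
    rw [Walk.support_mapLe_eq_support]
    exact fun s hs => mem_ballOn_of_mem_support p huS hp hs)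
  exact ⟨q⟩

lemma ballOn_erase_subset (hov : G.Adj o v) (ho : o ∈ S) (hv : v ∈ S.erase o) :
    ballOn G (S.erase o) v k ⊆ (ballOn G S o (k + 1)).erase o := by
  intro u hu
  obtain ⟨huS, p, hp⟩ := mem_ballOn.mp hu
  refine mem_erase.mpr ⟨(mem_erase.mp huS).1, mem_ballOn.mpr ⟨mem_of_mem_erase huS,
    Walk.cons (inducedOn_adj.mpr ⟨hov, ho, mem_of_mem_erase hv⟩)
      (p.mapLe (inducedOn_mono (erase_subset o S))), ?_⟩⟩
  rw [Walk.length_cons, Walk.length_mapLe]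
  omega

lemma exists_mem_ballOn_erase (hu : u ∈ (ballOn G S o (k + 1)).erase o) :
    ∃ v, G.Adj o v ∧ v ∈ S.erase o ∧ u ∈ ballOn G (S.erase o) v k := by
  obtain ⟨huo, hu⟩ := mem_erase.mp hu
  obtain ⟨huS, p, hp⟩ := mem_ballOn.mp hu
  obtain ⟨v, hov, q, hq⟩ := Walk.exists_eq_cons_of_ne huo.symm p.bypass
  have hoq : o ∉ q.support := ((Walk.cons_isPath_iff _ _).mp (hq ▸ p.bypass_isPath)).2
  obtain ⟨r, hr⟩ :=
    exists_walk_inducedOn_of_support_subset (T := S.erase o) (q.mapLe inducedOn_le)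
    (by
      rw [Walk.support_mapLe_eq_support]
      exact fun s hs => mem_erase.mpr
        ⟨fun h => hoq (h ▸ hs), mem_of_mem_support_inducedOn q huS hs⟩)
  have hlen := p.length_bypass_le_length
  rw [hq, Walk.length_cons] at hlen
  refine ⟨v, hov.1, mem_erase.mpr ⟨hov.1.ne', hov.2.2⟩,
    mem_ballOn.mpr ⟨mem_erase.mpr ⟨huo, huS⟩, r, ?_⟩⟩
  rw [hr, Walk.length_mapLe]
  omega

/-- An edge from `a` to a vertex `b` in another neighbour's ball would close a cycle
through `o`. -/
lemma mem_ballOn_erase_of_adj (hB : (inducedOn G (ballOn G S o (k + 1))).IsAcyclic)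
    (ho : o ∈ S) (hov : G.Adj o v) (hv : v ∈ S.erase o) {a b : V}
    (ha : a ∈ ballOn G (S.erase o) v k) (hb : b ∈ (ballOn G S o (k + 1)).erase o)
    (hab : G.Adj a b) : b ∈ ballOn G (S.erase o) v k := by
  set B := ballOn G S o (k + 1)
  obtain ⟨w, how, hw, hbw⟩ := exists_mem_ballOn_erase hb
  have hsub {v : V} (hov : G.Adj o v) (hv : v ∈ S.erase o) :
      ballOn G (S.erase o) v k ⊆ B.erase o :=
    ballOn_erase_subset hov ho hv
  have hadjB {v : V} (hov : G.Adj o v) (hv : v ∈ S.erase o) : (inducedOn G B).Adj o v :=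
    inducedOn_adj.mpr
      ⟨hov, self_mem_ballOn ho, mem_of_mem_erase (hsub hov hv (self_mem_ballOn hv))⟩
  obtain ⟨p⟩ : (inducedOn G (B.erase o)).Reachable v w :=
    ((reachable_of_mem_ballOn ha).mono (inducedOn_mono (hsub hov hv))).trans
      ((Adj.reachable (inducedOn_adj.mpr ⟨hab, hsub hov hv ha, hb⟩)).trans
        ((reachable_of_mem_ballOn hbw).mono (inducedOn_mono (hsub how hw))).symm)
  have hop : o ∉ (p.mapLe (inducedOn_mono (erase_subset o B))).support := by
    rw [Walk.support_mapLe_eq_support]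
    exact fun h => (mem_erase.mp
      (mem_of_mem_support_inducedOn p (hsub how hw (self_mem_ballOn hw)) h)).1 rfl
  obtain rfl := hB.eq_of_adj_of_notMem_support (hadjB hov hv) (hadjB how hw) _ hop
  exact hbw

lemma Rmd_ballOn_erase (hx : 0 < x) (hB : (inducedOn G (ballOn G S o (k + 1))).IsAcyclic)
    (ho : o ∈ S) (hov : G.Adj o v) (hv : v ∈ S.erase o) :
    Rmd G ((ballOn G S o (k + 1)).erase o) v x = Rmd G (ballOn G (S.erase o) v k) v x :=
  Rmd_eq_of_closed hx (ballOn_erase_subset hov ho hv)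
    (fun _ ha _ hb hab => mem_ballOn_erase_of_adj hB ho hov hv ha hb hab) (self_mem_ballOn hv)

theorem Rmd_ballOn_alternating (hx : 0 < x) (k : ℕ) (ho : o ∈ S)
    (hB : (inducedOn G (ballOn G S o k)).IsAcyclic) :
    (Even k → Rmd G S o x ≤ Rmd G (ballOn G S o k) o x) ∧
      (¬Even k → Rmd G (ballOn G S o k) o x ≤ Rmd G S o x) := by
  induction k generalizing S o with
  | zero =>
    refine ⟨fun _ => Rmd_le_Rmd_of_sum_le hx ho (self_mem_ballOn ho) ?_,
      fun h => (h Even.zero).elim⟩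
    rw [ballOn_zero ho, erase_singleton, filter_empty, sum_empty]
    exact sum_nonneg fun _ _ => Rmd_nonneg hx
  | succ k ih =>
    set B := ballOn G S o (k + 1)
    have hoB : o ∈ B := self_mem_ballOn ho
    have hN : (B.erase o).filter (G.Adj o) = (S.erase o).filter (G.Adj o) :=
      filter_adj_erase_eq ballOn_subset fun b hb hob =>
        mem_ballOn.mpr ⟨hb, Walk.cons (inducedOn_adj.mpr ⟨hob, ho, hb⟩) Walk.nil, by simp⟩
    have hsumB : ∑ v ∈ (B.erase o).filter (G.Adj o), Rmd G (B.erase o) v x =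
        ∑ v ∈ (S.erase o).filter (G.Adj o), Rmd G (ballOn G (S.erase o) v k) v x := by
      rw [hN]
      exact sum_congr rfl fun v hv => Rmd_ballOn_erase hx hB ho (mem_filter.mp hv).2
        (mem_filter.mp hv).1
    have hIH (v : V) (hv : v ∈ (S.erase o).filter (G.Adj o)) :=
      ih (mem_filter.mp hv).1 (hB.anti (inducedOn_mono
        ((ballOn_erase_subset (mem_filter.mp hv).2 ho (mem_filter.mp hv).1).trans
          (erase_subset o B))))
    rw [Nat.even_add_one, not_not]
    exact ⟨fun hk => Rmd_le_Rmd_of_sum_le hx ho hoB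
        (hsumB ▸ sum_le_sum fun v hv => (hIH v hv).2 hk),
      fun hk => Rmd_le_Rmd_of_sum_le hx hoB ho (hsumB ▸ sum_le_sum fun v hv => (hIH v hv).1 hk)⟩

end Balls

theorem stmt_5_general {V : Type*} [Fintype V] (G : SimpleGraph V) (o : V)
    (r : ℕ) (x : ℝ) (hx : 0 < x) :
    ((G.induce (ballF G o (2 * r) : Set V)).IsTree →
        Rmd G Finset.univ o x ≤ Rmd G (ballF G o (2 * r)) o x) ∧
      ((G.induce (ballF G o (2 * r + 1) : Set V)).IsTree →
        Rmd G (ballF G o (2 * r + 1)) o x ≤ Rmd G Finset.univ o x) := by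
  have key (k : ℕ) (hT : (G.induce (ballF G o k : Set V)).IsTree) :
      (Even k → Rmd G univ o x ≤ Rmd G (ballF G o k) o x) ∧
        (¬Even k → Rmd G (ballF G o k) o x ≤ Rmd G univ o x) := by
    rw [← ballOn_univ] at hT ⊢
    exact Rmd_ballOn_alternating hx k (mem_univ o) (isAcyclic_inducedOn hT.isAcyclic)
  exact ⟨fun hT => (key _ hT).1 (even_two_mul r),
    fun hT => (key _ hT).2 (Nat.not_even_two_mul_add_one r)⟩

/-- correlation inequalities on a locally tree-like graph: if the ball
`[G,o]_{2r}` is a tree then `R_x(G,o) ≤ R_x([G,o]_{2r},o)`; if `[G,o]_{2r+1}` is a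
tree then `R_x(G,o) ≥ R_x([G,o]_{2r+1},o)`. -/
theorem stmt_5 {V : Type*} [Fintype V] [DecidableEq V] (G : SimpleGraph V) (o : V)
    (r : ℕ) (x : ℝ) (hx : 0 < x) :
    ((G.induce (ballF G o (2 * r) : Set V)).IsTree →
        Rmd G Finset.univ o x ≤ Rmd G (ballF G o (2 * r)) o x) ∧
      ((G.induce (ballF G o (2 * r + 1) : Set V)).IsTree →
        Rmd G (ballF G o (2 * r + 1)) o x ≤ Rmd G Finset.univ o x) :=
  stmt_5_general G o r x hx
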